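/- Fix p > 0. For M > 1/p define I_p(M) := ∫₁^∞ (log(1/(1 - x^{-M})))^p dx. Then I_p(M) is finite, and there exist constants c, C > 0 (depending only on p) such that c/M ≤ I_p(M) ≤ C/M for all M ≥ 2/p. -/

import Mathlib

/-!
The substitution `u = x ^ (-M)` turns the integral into
`M⁻¹ * ∫₀¹ u ^ (-M⁻¹ - 1) * log (1 / (1 - u)) ^ p du`, so all the dependence on `M` sits
in the exponent of the weight. For `M ≥ 2 / p` that exponent lies in `[-1 - p / 2, -1]`, and since
`u ^ a` is antitone in `a` on `(0, 1)` the remaining integral is squeezed between its values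
at the two endpoints. The lower one is at least `∫₀¹ u ^ (p - 1) du = 1 / p` because
`u ≤ log (1 / (1 - u))`. Integrability comes from `log (1 / (1 - u)) ≤ 2 u` near `0` and from
`log y ≤ y ^ ε / ε` near `1`.
-/

open MeasureTheory Real Set

lemma le_log_one_div_one_sub {u : ℝ} (hu : u < 1) : u ≤ log (1 / (1 - u)) := by
  rw [one_div, log_inv]
  linarith [log_le_sub_one_of_pos (sub_pos.2 hu)]

lemma log_one_div_one_sub_le_two_mul {u : ℝ} (hu0 : 0 ≤ u) (hu : u ≤ 1 / 2) :
    log (1 / (1 - u)) ≤ 2 * u := by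
  have hv : 0 < 1 - u := by linarith
  calc log (1 / (1 - u)) ≤ 1 / (1 - u) - 1 := log_le_sub_one_of_pos (by positivity)
    _ = u / (1 - u) := by field_simp; ring
    _ ≤ 2 * u := by rw [div_le_iff₀ hv]; nlinarith

lemma log_one_div_one_sub_rpow_le {p s u : ℝ} (hp : 0 < p) (hs : 0 < s) (hu0 : 0 ≤ u)
    (hu : u < 1) : log (1 / (1 - u)) ^ p ≤ (p / s) ^ p * (1 - u) ^ (-s) := by
  have hv : 0 < 1 - u := sub_pos.2 hu
  have hlog : log (1 / (1 - u)) ≤ p / s * (1 - u) ^ (-(s / p)) := by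
    convert log_le_rpow_div (one_div_pos.2 hv).le (div_pos hs hp) using 1
    rw [div_rpow zero_le_one hv.le, one_rpow, rpow_neg hv.le]
    field_simp
  calc log (1 / (1 - u)) ^ p ≤ (p / s * (1 - u) ^ (-(s / p))) ^ p := by
        gcongr
        exact hu0.trans (le_log_one_div_one_sub hu)
    _ = (p / s) ^ p * (1 - u) ^ (-s) := by
        rw [mul_rpow (by positivity) (by positivity), ← rpow_mul hv.le]
        congr 2
        field_simp

lemma rpow_mul_log_one_div_one_sub_rpow_le {p a u : ℝ} (hp : 0 < p) (hu0 : 0 < u)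
    (hu : u ≤ 1 / 2) : u ^ a * log (1 / (1 - u)) ^ p ≤ 2 ^ p * u ^ (a + p) := by
  have hL : log (1 / (1 - u)) ^ p ≤ (2 * u) ^ p :=
    rpow_le_rpow (hu0.le.trans (le_log_one_div_one_sub (by linarith)))
      (log_one_div_one_sub_le_two_mul hu0.le hu) hp.le
  calc u ^ a * log (1 / (1 - u)) ^ p ≤ u ^ a * (2 * u) ^ p := by gcongr
    _ = 2 ^ p * u ^ (a + p) := by
      rw [mul_rpow zero_le_two hu0.le, rpow_add hu0]; ring

lemma integrableOn_Ico_one_sub_rpow {a r : ℝ} (ha : a ≤ 1) (hr : -1 < r) :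
    IntegrableOn (fun u : ℝ => (1 - u) ^ r) (Ico a 1) := by
  have h := (intervalIntegral.intervalIntegrable_rpow' hr (a := 0) (b := 1 - a)).comp_sub_left 1
  rw [sub_zero, sub_sub_cancel] at h
  exact (intervalIntegrable_iff_integrableOn_Ico_of_le ha).1 h.symm

lemma integrableOn_Ico_log_one_div_one_sub_rpow {p a : ℝ} (hp : 0 < p) (ha0 : 0 ≤ a)
    (ha : a ≤ 1) : IntegrableOn (fun u : ℝ => log (1 / (1 - u)) ^ p) (Ico a 1) := by
  refine ((integrableOn_Ico_one_sub_rpow ha (by norm_num : (-1 : ℝ) < -(1 / 2))).const_mul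
    ((p / (1 / 2)) ^ p)).mono' (by fun_prop : Measurable _).aestronglyMeasurable ?_
  filter_upwards [ae_restrict_mem measurableSet_Ico] with u hu
  have hL : 0 ≤ log (1 / (1 - u)) := by linarith [le_log_one_div_one_sub hu.2, hu.1]
  rw [norm_of_nonneg (rpow_nonneg hL p)]
  exact log_one_div_one_sub_rpow_le hp one_half_pos (ha0.trans hu.1) hu.2

lemma integrableOn_rpow_mul_log_one_div_one_sub_rpow {p a : ℝ} (hp : 0 < p) (ha : -1 < a + p) :
    IntegrableOn (fun u : ℝ => u ^ a * log (1 / (1 - u)) ^ p) (Ioo 0 1) := by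
  have hnear0 : IntegrableOn (fun u : ℝ => u ^ a * log (1 / (1 - u)) ^ p) (Ioc 0 (1 / 2)) := by
    refine (((intervalIntegral.intervalIntegrable_rpow' ha).1).const_mul (2 ^ p)).mono'
      (by fun_prop : Measurable _).aestronglyMeasurable ?_
    filter_upwards [ae_restrict_mem measurableSet_Ioc] with u hu
    have hL : 0 ≤ log (1 / (1 - u)) :=
      hu.1.le.trans (le_log_one_div_one_sub (by linarith [hu.2]))
    rw [norm_of_nonneg (mul_nonneg (rpow_nonneg hu.1.le a) (rpow_nonneg hL p))]
    exact rpow_mul_log_one_div_one_sub_rpow_le hp hu.1 hu.2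
  have hnear1 : IntegrableOn (fun u : ℝ => u ^ a * log (1 / (1 - u)) ^ p) (Ico (1 / 2) 1) :=
    (integrableOn_Ico_log_one_div_one_sub_rpow (a := 1 / 2) hp (by norm_num)
      (by norm_num)).continuousOn_mul_of_subset
      (continuousOn_id.rpow_const fun u hu => Or.inl (by linarith [hu.1] : (0 : ℝ) < u).ne')
      isCompact_Icc measurableSet_Ico Ico_subset_Icc_self
  refine (hnear0.union hnear1).mono_set fun u hu => ?_
  rcases le_or_gt u (1 / 2) with h | h
  · exact Or.inl ⟨hu.1, h⟩
  · exact Or.inr ⟨h.le, hu.2⟩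

section Substitution

variable {E : Type*} [NormedAddCommGroup E] [NormedSpace ℝ E] {M : ℝ}

lemma image_rpow_neg_inv_Ioo_zero_one (hM : 0 < M) :
    (fun u : ℝ => u ^ (-M⁻¹)) '' Ioo 0 1 = Ioi 1 := by
  ext x
  constructor
  · rintro ⟨u, ⟨hu0, hu1⟩, rfl⟩
    exact one_lt_rpow_of_pos_of_lt_one_of_neg hu0 hu1 (by simpa using hM)
  · intro (hx : 1 < x)
    refine ⟨x ^ (-M), ⟨by positivity, rpow_lt_one_of_one_lt_of_neg hx (by linarith)⟩, ?_⟩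
    show (x ^ (-M)) ^ (-M⁻¹) = x
    rw [← rpow_mul (by linarith), neg_mul_neg, mul_inv_cancel₀ hM.ne', rpow_one]

lemma rpow_neg_inv_rpow_neg {u : ℝ} (hM : 0 < M) (hu : 0 ≤ u) : (u ^ (-M⁻¹)) ^ (-M) = u := by
  rw [← rpow_mul hu, neg_mul_neg, inv_mul_cancel₀ hM.ne', rpow_one]

lemma hasDerivWithinAt_rpow_neg_inv {u : ℝ} (hu : u ∈ Ioo (0 : ℝ) 1) :
    HasDerivWithinAt (fun u : ℝ => u ^ (-M⁻¹)) (-M⁻¹ * u ^ (-M⁻¹ - 1)) (Ioo 0 1) u :=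
  (hasDerivAt_rpow_const (Or.inl hu.1.ne')).hasDerivWithinAt

lemma injOn_rpow_neg_inv (hM : 0 < M) : InjOn (fun u : ℝ => u ^ (-M⁻¹)) (Ioo 0 1) :=
  (rpow_left_injOn (by simpa using hM.ne')).mono fun _ hu => hu.1.le

lemma integrableOn_Ioi_one_comp_rpow_neg_iff (hM : 0 < M) (g : ℝ → E) :
    IntegrableOn (fun x => g (x ^ (-M))) (Ioi 1) ↔
      IntegrableOn (fun u => (M⁻¹ * u ^ (-M⁻¹ - 1)) • g u) (Ioo 0 1) := by
  rw [← image_rpow_neg_inv_Ioo_zero_one hM, integrableOn_image_iff_integrableOn_abs_deriv_smul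
    measurableSet_Ioo (fun u hu => hasDerivWithinAt_rpow_neg_inv hu) (injOn_rpow_neg_inv hM)]
  refine integrableOn_congr_fun (fun u hu => ?_) measurableSet_Ioo
  simp only [rpow_neg_inv_rpow_neg hM hu.1.le, abs_mul, abs_neg, abs_inv, abs_of_pos hM,
    abs_of_pos (rpow_pos_of_pos hu.1 _)]

lemma integral_Ioi_one_comp_rpow_neg (hM : 0 < M) (g : ℝ → E) :
    ∫ x in Ioi 1, g (x ^ (-M)) = ∫ u in Ioo 0 1, (M⁻¹ * u ^ (-M⁻¹ - 1)) • g u := by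
  rw [← image_rpow_neg_inv_Ioo_zero_one hM, integral_image_eq_integral_abs_deriv_smul
    measurableSet_Ioo (fun u hu => hasDerivWithinAt_rpow_neg_inv hu) (injOn_rpow_neg_inv hM)]
  refine setIntegral_congr_fun measurableSet_Ioo (fun u hu => ?_)
  simp only [rpow_neg_inv_rpow_neg hM hu.1.le, abs_mul, abs_neg, abs_inv, abs_of_pos hM,
    abs_of_pos (rpow_pos_of_pos hu.1 _)]

end Substitution

noncomputable def weightedLogIntegral (p a : ℝ) : ℝ :=
  ∫ u in Ioo 0 1, u ^ a * log (1 / (1 - u)) ^ p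

lemma one_div_le_weightedLogIntegral {p a : ℝ} (hp : 0 < p) (ha : a ≤ -1) (hap : -1 < a + p) :
    1 / p ≤ weightedLogIntegral p a := by
  have hint : IntegrableOn (fun u : ℝ => u ^ (p - 1)) (Ioo 0 1) :=
    (intervalIntegral.intervalIntegrable_rpow' (by linarith) (a := 0) (b := 1)).1.mono_set
      Ioo_subset_Ioc_self
  calc 1 / p = ∫ u in Ioo 0 1, u ^ (p - 1) := by
        rw [← integral_Ioc_eq_integral_Ioo, ← intervalIntegral.integral_of_le zero_le_one,
          integral_rpow (Or.inl (by linarith))]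
        simp [zero_rpow hp.ne']
    _ ≤ weightedLogIntegral p a := by
        refine setIntegral_mono_on hint (integrableOn_rpow_mul_log_one_div_one_sub_rpow hp hap)
          measurableSet_Ioo fun u hu => ?_
        calc u ^ (p - 1) ≤ u ^ (a + p) := rpow_le_rpow_of_exponent_ge hu.1 hu.2.le (by linarith)
          _ = u ^ a * u ^ p := rpow_add hu.1 a p
          _ ≤ u ^ a * log (1 / (1 - u)) ^ p := mul_le_mul_of_nonneg_left
            (rpow_le_rpow hu.1.le (le_log_one_div_one_sub hu.2) hp.le) (rpow_nonneg hu.1.le a)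

lemma weightedLogIntegral_le_of_le {p a b : ℝ} (hp : 0 < p) (hab : a ≤ b) (hap : -1 < a + p) :
    weightedLogIntegral p b ≤ weightedLogIntegral p a := by
  refine setIntegral_mono_on (integrableOn_rpow_mul_log_one_div_one_sub_rpow hp (by linarith))
    (integrableOn_rpow_mul_log_one_div_one_sub_rpow hp hap) measurableSet_Ioo fun u hu => ?_
  have hL : 0 ≤ log (1 / (1 - u)) := hu.1.le.trans (le_log_one_div_one_sub hu.2)
  exact mul_le_mul_of_nonneg_right (rpow_le_rpow_of_exponent_ge hu.1 hu.2.le hab)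
    (rpow_nonneg hL p)

lemma integral_Ioi_one_log_one_div_one_sub_rpow_eq {p M : ℝ} (hM : 0 < M) :
    ∫ x in Ioi (1 : ℝ), log (1 / (1 - x ^ (-M))) ^ p =
      M⁻¹ * weightedLogIntegral p (-M⁻¹ - 1) := by
  rw [weightedLogIntegral, ← integral_const_mul]
  exact (integral_Ioi_one_comp_rpow_neg hM fun u => log (1 / (1 - u)) ^ p).trans
    (by simp only [smul_eq_mul, mul_assoc])

theorem integral_log_one_div_one_sub_rpow_asymp (p : ℝ) (hp : 0 < p) :
    (∀ M : ℝ, 1 / p < M →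
      IntegrableOn (fun x : ℝ => (Real.log (1 / (1 - x ^ (-M)))) ^ p) (Set.Ioi 1)) ∧
    ∃ c C : ℝ, 0 < c ∧ 0 < C ∧
      ∀ M : ℝ, 2 / p ≤ M →
        c / M ≤ (∫ x in Set.Ioi (1 : ℝ), (Real.log (1 / (1 - x ^ (-M)))) ^ p) ∧
        (∫ x in Set.Ioi (1 : ℝ), (Real.log (1 / (1 - x ^ (-M)))) ^ p) ≤ C / M := by
  refine ⟨fun M hM => ?_, 1 / p, weightedLogIntegral p (-1 - p / 2), by positivity,
    (one_div_pos.2 hp).trans_le (one_div_le_weightedLogIntegral hp (by linarith) (by linarith)),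
    fun M hM => ?_⟩
  · have hM0 : 0 < M := (one_div_pos.2 hp).trans hM
    have hMp : M⁻¹ < p := by rwa [inv_lt_comm₀ hM0 hp, ← one_div]
    refine (integrableOn_Ioi_one_comp_rpow_neg_iff hM0 fun u => log (1 / (1 - u)) ^ p).2 ?_
    simp only [smul_eq_mul, mul_assoc]
    exact (integrableOn_rpow_mul_log_one_div_one_sub_rpow hp (a := -M⁻¹ - 1)
      (by linarith)).const_mul M⁻¹
  · have hM0 : 0 < M := (div_pos two_pos hp).trans_le hM
    have hMp : M⁻¹ ≤ p / 2 := by rw [inv_le_comm₀ hM0 (by positivity)]; simpa using hM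
    rw [integral_Ioi_one_log_one_div_one_sub_rpow_eq hM0, div_eq_inv_mul (1 / p),
      div_eq_inv_mul _ M]
    constructor
    · gcongr
      exact one_div_le_weightedLogIntegral hp (a := -M⁻¹ - 1) (by linarith [inv_pos.2 hM0])
        (by linarith)
    · gcongr
      exact weightedLogIntegral_le_of_le hp (by linarith) (by linarith)
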